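/- arXiv:cs/9909009 — 9 statements merged into one kernel-verified Lean document; each statement's English description precedes it below -/
import Mathlib

section
/- Let (D, ⊑) be a partial ordering with least element ⊥ and F = {f₁, …, f_k} a finite set of inflationary functions on D. If D is finite, then every sequence of states of the Generic Iteration algorithm GI terminates, i.e., there is no infinite sequence of iterations of the while loop. Formally: there is no infinite sequence (d₀, G₀), (d₁, G₁), … with d₀ = ⊥, G₀ = F, and at each step G_{i+1} = (G_i − {g}) ∪ U_i with U_i = ∅ whenever g(d_i) = d_i, and d_{i+1} = g(d_i), for some chosen g ∈ G_i. -/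
/-! Each step of `GI` strictly decreases the pair `(dᵢ, |Gᵢ|)` in the lexicographic order on
`(D, ⊒) × (ℕ, ≤)`: an inflationary `g` either moves `dᵢ` strictly up, or fixes it, in which
case condition B adds nothing and `Gᵢ` loses `g`. Since `D` is finite this order is
well-founded, so no infinite run exists. -/

section GenericIteration

variable {D : Type*} [PartialOrder D]

/-- `ncard` is `0` on infinite sets; it is the true size here because every `G` met in a run
lies in the finite set `F`. -/
noncomputable def giMeasure (d : D) (G : Set (D → D)) : Dᵒᵈ ×ₗ ℕ :=
  toLex (OrderDual.toDual d, G.ncard)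

lemma giMeasure_step_lt {G U : Set (D → D)} {g : D → D} {d : D} (hG : G.Finite) (hg : g ∈ G)
    (hinfl : ∀ x, x ≤ g x) (hB : g d = d → U = ∅) :
    giMeasure (g d) ((G \ {g}) ∪ U) < giMeasure d G := by
  rw [giMeasure, giMeasure, Prod.Lex.toLex_lt_toLex]
  by_cases hfix : g d = d
  · rw [hB hfix, Set.union_empty, hfix]
    exact Or.inr ⟨rfl, Set.ncard_sdiff_singleton_lt_of_mem hg hG⟩
  · exact Or.inl (OrderDual.toDual_lt_toDual.mpr ((hinfl d).lt_of_ne' hfix))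

end GenericIteration

lemma Set.subset_of_step_eq_sdiff_union {α : Type*} {F : Set α} {G U : ℕ → Set α} {g : ℕ → α}
    (h0 : G 0 ⊆ F) (hU : ∀ i, U i ⊆ F) (hstep : ∀ i, G (i + 1) = (G i \ {g i}) ∪ U i) (i : ℕ) :
    G i ⊆ F := by
  induction i with
  | zero => exact h0
  | succ i ih => exact hstep i ▸ Set.union_subset (Set.sdiff_subset.trans ih) (hU i)

/-- Termination of the Generic Iteration algorithm `GI`: if `D` is a finite
partial ordering with least element `⊥` and `F` is a finite set of inflationary
functions on `D`, then there is no infinite sequence of states `(dᵢ, Gᵢ)` of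
the `GI` algorithm, where at each step some `g ∈ Gᵢ` is chosen, `Gᵢ₊₁` is
obtained by removing `g` and adding a set `Uᵢ ⊆ F` of functions (empty whenever
`g (dᵢ) = dᵢ`, as required by condition B), and `dᵢ₊₁ = g (dᵢ)`. -/
theorem GI_termination {D : Type*} [PartialOrder D] [OrderBot D] [Finite D]
    (F : Set (D → D)) (hF : F.Finite)
    (hinfl : ∀ f ∈ F, ∀ x : D, x ≤ f x) :
    ¬ ∃ (d : ℕ → D) (G : ℕ → Set (D → D)) (g : ℕ → D → D) (U : ℕ → Set (D → D)),
        d 0 = ⊥ ∧ G 0 = F ∧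
        ∀ i : ℕ,
          g i ∈ G i ∧
          U i ⊆ F ∧
          (g i (d i) = d i → U i = ∅) ∧
          G (i + 1) = (G i \ {g i}) ∪ U i ∧
          d (i + 1) = g i (d i) := by
  rintro ⟨d, G, g, U, -, hG0, hrun⟩
  choose hg hUF hB hG hd using hrun
  have hGF : ∀ i, G i ⊆ F := Set.subset_of_step_eq_sdiff_union hG0.subset hUF hG
  refine not_strictAnti_of_wellFoundedLT (fun i ↦ giMeasure (d i) (G i))
    (strictAnti_nat_of_succ_lt fun i ↦ ?_)
  rw [hG i, hd i]
  exact giMeasure_step_lt (hF.subset (hGF i)) (hg i) (hinfl _ (hGF i (hg i))) (hB i)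
end

section
/- Suppose update(G, g, d) satisfies conditions A and B. Let Comm(g) ⊆ F be a set of functions such that g ∉ Comm(g) and every element of Comm(g) commutes with g (f∘g = g∘f). Then the function update'(G, g, d) := update(G, g, d) − Comm(g) also satisfies conditions A and B. -/
/-- Update Theorem (ii): if `update(G, g, d)` satisfies conditions A and B and
`Comm(g) ⊆ F` is a set of functions not containing `g`, each of which commutes
with `g`, then `update(G, g, d) − Comm(g)` also satisfies conditions A and B. -/
theorem update_minus_comm {D : Type*} (F G : Set (D → D)) (g : D → D)
    (d : D) (U : Set (D → D)) (Comm : Set (D → D))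
    (hCommF : Comm ⊆ F) (hgComm : g ∉ Comm)
    (hcomm : ∀ f ∈ Comm, ∀ x : D, f (g x) = g (f x))
    (hA : {f : D → D | f ∈ F \ G ∧ f d = d ∧ f (g d) ≠ g d} ⊆ U)
    (hB : g d = d → U = ∅) :
    ({f : D → D | f ∈ F \ G ∧ f d = d ∧ f (g d) ≠ g d} ⊆ U \ Comm) ∧
    (g d = d → U \ Comm = ∅) := by
  constructor
  · intro f hf
    refine ⟨hA hf, ?_⟩
    intro hfC
    exact hf.2.2 (by rw [hcomm f hfC d, hf.2.1])
  · intro h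
    rw [hB h, Set.empty_diff]
end

section
/- Let D = D₁ × ⋯ × D_n be a product of sets and suppose every function in F is the canonic extension f⁺ of a function f with scheme s (f⁺ changes only the components in s and acts as f on them). Then the function update(G, g⁺, d) := {f⁺ ∈ F − G : f depends on some i in the scheme s of g such that d[i] ≠ g⁺(d)[i]} satisfies conditions A and B. -/
/-- Update Note: on a compound domain `D = D₁ × ⋯ × D_n`, if every function in
`F` is the canonic extension of a function with a scheme (it leaves components
outside its scheme unchanged, and its action on the components of its scheme
depends only on those components), then the function
`update(G, g, d) := {f ∈ F − G : f depends on some i in the scheme of g with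
d[i] ≠ g(d)[i]}` satisfies conditions A and B. -/
theorem update_note_compound {n : ℕ} {D : Fin n → Type*}
    (F : Set ((∀ i, D i) → (∀ i, D i)))
    (sch : ((∀ i, D i) → (∀ i, D i)) → Set (Fin n))
    -- each `f ∈ F` is the canonic extension of a function with scheme `sch f`:
    (hout : ∀ f ∈ F, ∀ (d : ∀ i, D i) (i : Fin n), i ∉ sch f → f d i = d i)
    (hdep : ∀ f ∈ F, ∀ d e : ∀ i, D i,
      (∀ i ∈ sch f, d i = e i) → ∀ i ∈ sch f, f d i = f e i)
    (G : Set ((∀ i, D i) → (∀ i, D i)))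
    (g : (∀ i, D i) → (∀ i, D i)) (hg : g ∈ F) (d : ∀ i, D i) :
    -- condition A
    ({f : (∀ i, D i) → (∀ i, D i) | f ∈ F \ G ∧ f d = d ∧ f (g d) ≠ g d} ⊆
      {f : (∀ i, D i) → (∀ i, D i) | f ∈ F \ G ∧
        ∃ i ∈ sch f, i ∈ sch g ∧ d i ≠ g d i}) ∧
    -- condition B
    (g d = d →
      {f : (∀ i, D i) → (∀ i, D i) | f ∈ F \ G ∧
        ∃ i ∈ sch f, i ∈ sch g ∧ d i ≠ g d i} = ∅) := by
  constructor
  · rintro f ⟨hfFG, hfd, hfgd⟩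
    refine ⟨hfFG, ?_⟩
    by_contra hno
    push_neg at hno
    apply hfgd
    have hagree : ∀ i ∈ sch f, g d i = d i := by
      intro i hi
      by_cases higs : i ∈ sch g
      · exact (hno i hi higs).symm
      · exact hout g hg d i higs
    funext i
    by_cases hif : i ∈ sch f
    · calc f (g d) i = f d i := hdep f hfFG.1 (g d) d hagree i hif
        _ = d i := congrFun hfd i
        _ = g d i := (hagree i hif).symm
    · exact hout f hfFG.1 (g d) i hif
  · intro hgd
    ext f
    simp only [Set.mem_setOf_eq, Set.mem_empty_iff_false, iff_false, not_and]
    rintro - ⟨i, -, -, hne⟩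
    exact hne (congrFun hgd.symm i)
end

section
/- Let C be a constraint on variables y₁,…,y_k. For any i, j ∈ [1..k], the projection functions π_i and π_j of C commute: π_i(π_j(X₁,…,X_k)) = π_j(π_i(X₁,…,X_k)) for all (X₁,…,X_k). -/
/-!
`π_j` shrinks `X_j` only to the `j`-th coordinates of points of `C` in the box `X₁ × ⋯ × X_k`,
so it removes no point of `C` from that box. Hence `π_i ∘ π_j` writes the same `i`-th component
as `π_i` alone, and the two functions update different coordinates, which commutes.
-/

/-- The projection function `π_i` associated with a constraint `C`: it replaces
the `i`-th component `Xᵢ` of its argument by `Π_i(C ∩ (X₁ × ⋯ × X_k))` and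
leaves the other components unchanged. -/
def proj {k : ℕ} {E : Fin k → Type*} (C : Set (∀ j, E j)) (i : Fin k)
    (X : ∀ j, Set (E j)) : ∀ j, Set (E j) :=
  Function.update X i {a : E i | ∃ d ∈ C, (∀ j, d j ∈ X j) ∧ d i = a}

section

variable {k : ℕ} {E : Fin k → Type*} (C : Set (∀ j, E j))

theorem proj_apply_self (i : Fin k) (X : ∀ l, Set (E l)) :
    proj C i X i = {a : E i | ∃ d ∈ C, (∀ l, d l ∈ X l) ∧ d i = a} :=
  Function.update_self ..

theorem forall_mem_proj_iff (j : Fin k) (X : ∀ l, Set (E l)) {d : ∀ l, E l}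
    (hd : d ∈ C) : (∀ l, d l ∈ proj C j X l) ↔ ∀ l, d l ∈ X l := by
  rw [proj, Function.forall_update_iff _ (p := fun l s => d l ∈ s)]
  refine ⟨?_, fun hdX => ⟨⟨d, hd, hdX, rfl⟩, fun l _ => hdX l⟩⟩
  rintro ⟨⟨d', -, hd'X, hd'j⟩, hdX⟩ l
  rcases eq_or_ne l j with rfl | hlj
  · exact hd'j ▸ hd'X l
  · exact hdX l hlj

theorem proj_proj (i j : Fin k) (X : ∀ l, Set (E l)) :
    proj C i (proj C j X) = Function.update (proj C j X) i (proj C i X i) := by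
  rw [proj, proj_apply_self]
  congr 1
  ext a
  exact exists_congr fun d => and_congr_right fun hd =>
    and_congr_left' (forall_mem_proj_iff C j X hd)

end

/-- Commutativity Lemma (i): for any `i, j ∈ [1..k]` the projection functions
`π_i` and `π_j` of a constraint `C` commute. -/
theorem proj_commute {k : ℕ} {E : Fin k → Type*} (C : Set (∀ j, E j))
    (i j : Fin k) :
    ∀ X : ∀ l, Set (E l), proj C i (proj C j X) = proj C j (proj C i X) := by
  intro X
  rcases eq_or_ne i j with rfl | hij
  · rfl
  · rw [proj_proj, proj_proj]
    simp only [proj, Function.update_self]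
    exact Function.update_comm hij.symm ..
end

section
/- Consider two binary constraints C on variables x, y and E on variables x, z (sharing the first variable x). Then the canonic extensions of π₁ of C and π₁ of E (to the product of powersets of the domains of x, y, z) commute. -/
/-- The canonic extension (to the product of the powersets of the domains of
`x`, `y`, `z`) of the `π₁` function of a binary constraint `C` on `x, y`:
it shrinks the domain of `x` using the domain of `y`. -/
def pi1xy {Dx Dy Dz : Type*} (C : Set (Dx × Dy))
    (p : Set Dx × Set Dy × Set Dz) : Set Dx × Set Dy × Set Dz :=
  ({a ∈ p.1 | ∃ b ∈ p.2.1, (a, b) ∈ C}, p.2.1, p.2.2)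

/-- The canonic extension of the `π₁` function of a binary constraint `E` on
`x, z`: it shrinks the domain of `x` using the domain of `z`. -/
def pi1xz {Dx Dy Dz : Type*} (E : Set (Dx × Dz))
    (p : Set Dx × Set Dy × Set Dz) : Set Dx × Set Dy × Set Dz :=
  ({a ∈ p.1 | ∃ c ∈ p.2.2, (a, c) ∈ E}, p.2.1, p.2.2)

/-- Commutativity Lemma (ii): for two binary constraints `C` on the variables
`x, y` and `E` on the variables `x, z` (sharing the variable `x`), the canonic
extensions of the `π₁` function of `C` and of the `π₁` function of `E`
commute. -/
theorem pi1_commute {Dx Dy Dz : Type*} (C : Set (Dx × Dy)) (E : Set (Dx × Dz)) :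
    ∀ p : Set Dx × Set Dy × Set Dz,
      pi1xy C (pi1xz E p) = pi1xz E (pi1xy C p) := by
  intro p
  simp only [pi1xy, pi1xz]
  ext a <;> simp <;> tauto
end

section
/- Let (D, ⊑) be a partial ordering with least element ⊥ and let f₁, …, f_k be monotonic, inflationary, idempotent functions on D such that f_i(f_j(x)) ⊑ f_j(f_i(x)) for all x whenever i > j. Then f₁(f₂(⋯f_k(⊥)⋯)) is the least common fixpoint of f₁, …, f_k. -/
/-- Simple Iteration Lemma: let `f 0, …, f (k-1)` be monotonic, inflationary
and idempotent functions on a partial ordering with least element `⊥`, such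
that `f i` semi-commutes with `f j` whenever `j < i`. Then
`f 0 (f 1 (⋯ f (k-1) (⊥) ⋯))` is the least common fixpoint of the
functions. -/
theorem simple_iteration_lemma {D : Type*} [PartialOrder D] [OrderBot D]
    (k : ℕ) (f : Fin k → D → D)
    (hmono : ∀ i, Monotone (f i))
    (hinfl : ∀ i (x : D), x ≤ f i x)
    (hidem : ∀ i (x : D), f i (f i x) = f i x)
    (hsemi : ∀ i j : Fin k, j < i → ∀ x : D, f i (f j x) ≤ f j (f i x)) :
    (∀ i, f i ((List.ofFn f).foldr (fun g h => g ∘ h) id ⊥) =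
      (List.ofFn f).foldr (fun g h => g ∘ h) id ⊥) ∧
    (∀ e : D, (∀ i, f i e = e) →
      (List.ofFn f).foldr (fun g h => g ∘ h) id ⊥ ≤ e) := by
  set L := List.ofFn f with hL
  have hlen : L.length = k := by simp [hL]
  -- d j : result of applying f j ∘ ⋯ ∘ f (k-1) to ⊥
  set d : ℕ → D := fun j => (L.drop j).foldr (fun g h => g ∘ h) id ⊥ with hd
  have hstep : ∀ j (h : j < k), d j = f ⟨j, h⟩ (d (j + 1)) := by
    intro j h
    have hj : j < L.length := by omega
    have : L.drop j = L[j] :: L.drop (j + 1) := List.drop_eq_getElem_cons hj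
    simp only [hd, this, List.foldr_cons]
    have : L[j] = f ⟨j, h⟩ := by simp [hL]
    rw [this]
    rfl
  have hdk : d k = ⊥ := by
    simp [hd, List.drop_eq_nil_of_le (le_of_eq hlen)]
  have hd0 : d 0 = L.foldr (fun g h => g ∘ h) id ⊥ := by simp [hd]
  -- main descent lemma
  have key : ∀ (i : Fin k) (m j : ℕ), j + m = i.val → f i (d j) ≤ d j := by
    intro i m
    induction m with
    | zero =>
      intro j hj
      simp only [Nat.add_zero] at hj
      subst hj
      rw [hstep i.val i.isLt]
      have : (⟨(i : ℕ), i.isLt⟩ : Fin k) = i := rfl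
      rw [this, hidem]
    | succ m ih =>
      intro j hj
      have hjk : j < k := by omega
      rw [hstep j hjk]
      calc f i (f ⟨j, hjk⟩ (d (j + 1)))
          ≤ f ⟨j, hjk⟩ (f i (d (j + 1))) := by
            apply hsemi
            simp [Fin.lt_def]; omega
        _ ≤ f ⟨j, hjk⟩ (d (j + 1)) := by
            apply hmono
            exact ih (j + 1) (by omega)
  constructor
  · intro i
    rw [← hd0]
    exact le_antisymm (key i i.val 0 (by omega)) (hinfl i (d 0))
  · intro e he
    rw [← hd0]
    have : ∀ m j, j + m = k → d j ≤ e := by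
      intro m
      induction m with
      | zero => intro j hj; simp only [Nat.add_zero] at hj; subst hj
                rw [hdk]; exact bot_le
      | succ m ih =>
        intro j hj
        have hjk : j < k := by omega
        rw [hstep j hjk]
        calc f ⟨j, hjk⟩ (d (j + 1)) ≤ f ⟨j, hjk⟩ e := hmono _ (ih (j + 1) (by omega))
          _ = e := he _
    exact this k 0 (by omega)
end

section
/- Let (D, ⊑) be a partial ordering with least element ⊥ and f₁, …, f_k monotonic, inflationary, idempotent functions with f_i semi-commuting with f_j for i > j. Then for every i ∈ [1..k], f_i(f₁ f₂ ⋯ f_k(⊥)) = f₁ f₂ ⋯ f_k(⊥), i.e., the single sweep f₁∘⋯∘f_k applied to ⊥ yields a common fixpoint of all the f_i. -/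
/-- Single-sweep fixpoint: let `f 0, …, f (k-1)` be monotonic, inflationary
and idempotent functions on a partial ordering with least element `⊥`, such
that `f i` semi-commutes with `f j` whenever `j < i`. Then the single sweep
`f 0 ∘ f 1 ∘ ⋯ ∘ f (k-1)` applied to `⊥` yields a common fixpoint of all the
functions: `f i (f 0 (f 1 (⋯ f (k-1) (⊥) ⋯))) = f 0 (f 1 (⋯ f (k-1) (⊥) ⋯))`
for every `i`. -/
theorem single_sweep_common_fixpoint {D : Type*} [PartialOrder D] [OrderBot D]
    (k : ℕ) (f : Fin k → D → D)
    (hmono : ∀ i, Monotone (f i))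
    (hinfl : ∀ i (x : D), x ≤ f i x)
    (hidem : ∀ i (x : D), f i (f i x) = f i x)
    (hsemi : ∀ i j : Fin k, j < i → ∀ x : D, f i (f j x) ≤ f j (f i x)) :
    ∀ i, f i ((List.ofFn f).foldr (fun g h => g ∘ h) id ⊥) =
      (List.ofFn f).foldr (fun g h => g ∘ h) id ⊥ := by
  intro i
  -- rewrite the fold over `List.ofFn f` as a fold over `List.finRange k`
  set g : ℕ → D → D := fun n x =>
    ((List.finRange k).drop n).foldr (fun j h => f j ∘ h) id x with hg
  have hfull : (List.ofFn f).foldr (fun g h => g ∘ h) id ⊥ = g 0 ⊥ := by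
    simp [hg, List.ofFn_eq_map, List.foldr_map]
  -- unfolding lemma: for n < k, g n x = f ⟨n⟩ (g (n+1) x)
  have hstep : ∀ (n : ℕ) (hn : n < k) (x : D),
      g n x = f ⟨n, hn⟩ (g (n + 1) x) := by
    intro n hn x
    have hn' : n < (List.finRange k).length := by simpa using hn
    have h1 : (List.finRange k).drop n =
        (List.finRange k)[n]'hn' :: (List.finRange k).drop (n + 1) :=
      List.drop_eq_getElem_cons (by simpa using hn)
    have h2 : (List.finRange k)[n]'hn' = ⟨n, hn⟩ := by simp
    rw [h2] at h1
    simp [hg, h1]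
  -- key lemma: for n ≤ i, f i (g n x) ≤ g n x
  have key : ∀ (m n : ℕ) (x : D), i.val - n = m → n ≤ i.val →
      f i (g n x) ≤ g n x := by
    intro m
    induction m with
    | zero =>
      intro n x hm hn
      have hni : n = i.val := le_antisymm hn (by omega)
      subst hni
      rw [hstep i.val i.isLt x]
      have : (⟨i.val, i.isLt⟩ : Fin k) = i := Fin.ext rfl
      rw [this, hidem]
    | succ m ih =>
      intro n x hm hn
      have hnk : n < k := lt_of_lt_of_le (by omega) (le_of_lt i.isLt)
      rw [hstep n hnk x]
      have hji : (⟨n, hnk⟩ : Fin k) < i := by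
        simp [Fin.lt_def]; omega
      calc f i (f ⟨n, hnk⟩ (g (n + 1) x))
          ≤ f ⟨n, hnk⟩ (f i (g (n + 1) x)) := hsemi i ⟨n, hnk⟩ hji _
        _ ≤ f ⟨n, hnk⟩ (g (n + 1) x) :=
            hmono _ (ih (n + 1) x (by omega) (by omega))
  rw [hfull]
  exact le_antisymm (key i.val 0 ⊥ (by omega) (by omega)) (hinfl i _)
end

section
/- Consider a normalized CSP and two subsequences x₁, y₁, z and x₂, y₂, u of its variables with u ≺ z in the variable ordering. Then the canonic extension of f^z_{x₁,y₁} semi-commutes with the canonic extension of f^u_{x₂,y₂} with respect to the componentwise superset ordering ⊇. -/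
/-- Composition of binary relations. -/
def relComp {α β γ : Type*} (R : Set (α × β)) (S : Set (β × γ)) : Set (α × γ) :=
  {p | ∃ c, (p.1, c) ∈ R ∧ (c, p.2) ∈ S}

/-- Transposition of a binary relation. -/
def relTransp {α β : Type*} (R : Set (α × β)) : Set (β × α) :=
  {p | (p.2, p.1) ∈ R}

/-- The canonic extension of `f^z_{x,y}` to the full product of the powersets
of all binary constraints of a normalized CSP with variables `Fin n` and
domains `D i`: the state `S` assigns to each pair `(i, j)` of variables the
current constraint on them, and the function replaces the component for
`(x, y)` by its intersection with `S(x,z) · S(y,z)ᵀ`, leaving everything else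
unchanged. -/
def fExt {n : ℕ} {D : Fin n → Type*} (x y z : Fin n)
    (S : ∀ p : Fin n × Fin n, Set (D p.1 × D p.2)) :
    ∀ p : Fin n × Fin n, Set (D p.1 × D p.2) :=
  Function.update S (x, y)
    (S (x, y) ∩ relComp (S (x, z)) (relTransp (S (y, z))))

/-!
`f^u_{x₂,y₂}` rewrites only the constraint on `(x₂, y₂)`, whereas `f^z_{x₁,y₁}` reads only those
on `(x₁, z)` and `(y₁, z)`, which differ from it since `y₂ < u < z`. Both maps are monotone and
deflationary, so `f^u (f^z S) ≤ f^u S`, and the `(x₁, y₁)`-component of `f^u (f^z S)` lies in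
`S(x₁,z) · S(y₁,z)ᵀ`, which is also the factor `f^z` uses on `f^u S`. Together these two facts
say `f^u (f^z S) ≤ f^z (f^u S)`.
-/

lemma relComp_mono {α β γ : Type*} {R R' : Set (α × β)} {S S' : Set (β × γ)}
    (hR : R ⊆ R') (hS : S ⊆ S') : relComp R S ⊆ relComp R' S' :=
  fun _ ⟨c, hc₁, hc₂⟩ => ⟨c, hR hc₁, hS hc₂⟩

lemma relTransp_mono {α β : Type*} {R R' : Set (α × β)} (h : R ⊆ R') :
    relTransp R ⊆ relTransp R' :=
  fun _ hp => h hp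

section fExt

variable {n : ℕ} {D : Fin n → Type*}

lemma fExt_apply_of_ne {x y z : Fin n} (S : ∀ p : Fin n × Fin n, Set (D p.1 × D p.2))
    {p : Fin n × Fin n} (h : p ≠ (x, y)) : fExt x y z S p = S p :=
  Function.update_of_ne h _ _

lemma le_fExt_iff {x y z : Fin n} {S T : ∀ p : Fin n × Fin n, Set (D p.1 × D p.2)} :
    T ≤ fExt x y z S ↔ T ≤ S ∧ T (x, y) ⊆ relComp (S (x, z)) (relTransp (S (y, z))) := by
  rw [fExt, le_update_iff, Set.subset_inter_iff, Pi.le_def]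
  constructor
  · rintro ⟨⟨hS, hC⟩, hne⟩
    refine ⟨fun p => ?_, hC⟩
    rcases eq_or_ne p (x, y) with rfl | hp
    exacts [hS, hne p hp]
  · rintro ⟨hS, hC⟩
    exact ⟨⟨hS _, hC⟩, fun p _ => hS p⟩

lemma fExt_le (x y z : Fin n) (S : ∀ p : Fin n × Fin n, Set (D p.1 × D p.2)) :
    fExt x y z S ≤ S :=
  (le_fExt_iff.1 le_rfl).1

lemma fExt_apply_self_subset (x y z : Fin n) (S : ∀ p : Fin n × Fin n, Set (D p.1 × D p.2)) :
    fExt x y z S (x, y) ⊆ relComp (S (x, z)) (relTransp (S (y, z))) :=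
  (le_fExt_iff.1 le_rfl).2

lemma fExt_mono (x y z : Fin n) {S T : ∀ p : Fin n × Fin n, Set (D p.1 × D p.2)}
    (h : S ≤ T) : fExt x y z S ≤ fExt x y z T :=
  le_fExt_iff.2 ⟨(fExt_le x y z S).trans h,
    (fExt_apply_self_subset x y z S).trans (relComp_mono (h _) (relTransp_mono (h _)))⟩

end fExt

theorem fz_semi_commutes_general {n : ℕ} {D : Fin n → Type*}
    (x₁ y₁ z x₂ y₂ u : Fin n)
    (h4 : y₂ < u) (huz : u < z) :
    ∀ (S : ∀ p : Fin n × Fin n, Set (D p.1 × D p.2)) (p : Fin n × Fin n),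
      fExt x₂ y₂ u (fExt x₁ y₁ z S) p ⊆ fExt x₁ y₁ z (fExt x₂ y₂ u S) p := by
  intro S
  have hz : ∀ w, (w, z) ≠ (x₂, y₂) := fun w h => (h4.trans huz).ne' (Prod.ext_iff.1 h).2
  refine le_fExt_iff.2 ⟨fExt_mono _ _ _ (fExt_le _ _ _ S), ?_⟩
  rw [fExt_apply_of_ne S (hz x₁), fExt_apply_of_ne S (hz y₁)]
  exact (fExt_le _ _ _ _ _).trans (fExt_apply_self_subset _ _ _ S)

/-- Semi-commutativity Lemma for directional path consistency: consider a
normalized CSP and two subsequences `x₁, y₁, z` and `x₂, y₂, u` of its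
variables with `u < z`. Then the canonic extension of `f^z_{x₁,y₁}`
semi-commutes with the canonic extension of `f^u_{x₂,y₂}` w.r.t. the
componentwise ordering `⊇`: each component of
`(f^u_{x₂,y₂})⁺ ((f^z_{x₁,y₁})⁺ S)` is a subset of the corresponding component
of `(f^z_{x₁,y₁})⁺ ((f^u_{x₂,y₂})⁺ S)`. -/
theorem fz_semi_commutes {n : ℕ} {D : Fin n → Type*}
    (x₁ y₁ z x₂ y₂ u : Fin n)
    (h1 : x₁ < y₁) (h2 : y₁ < z) (h3 : x₂ < y₂) (h4 : y₂ < u) (huz : u < z) :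
    ∀ (S : ∀ p : Fin n × Fin n, Set (D p.1 × D p.2)) (p : Fin n × Fin n),
      fExt x₂ y₂ u (fExt x₁ y₁ z S) p ⊆ fExt x₁ y₁ z (fExt x₂ y₂ u S) p :=
  fz_semi_commutes_general x₁ y₁ z x₂ y₂ u h4 huz
end

section
/- Let (D, ⊑) be a finite partial ordering with least element ⊥ and F a finite set of monotonic and inflationary functions on D. Then the least common fixpoint of the functions in F exists. -/
/-!
Among the elements lying below every common fixpoint (a set containing `⊥`), pick a maximal one,
`d`. For `f ∈ F`, monotonicity gives `f d ≤ f e = e` for every common fixpoint `e`, so `f d` is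
again such an element, and `d ≤ f d` since `f` is inflationary. Maximality forces `f d = d`, so
`d` is itself a common fixpoint, hence the least one.
-/

section CommonFixedPoints

variable {α : Type*} [PartialOrder α] (F : Set (α → α))

def commonFixedPoints : Set α := {x | ∀ f ∈ F, f x = x}

variable {F}

theorem Monotone.map_mem_lowerBounds_commonFixedPoints {f : α → α} (hf : Monotone f)
    (hfF : f ∈ F) {x : α} (hx : x ∈ lowerBounds (commonFixedPoints F)) :
    f x ∈ lowerBounds (commonFixedPoints F) :=
  fun _ he => he f hfF ▸ hf (hx he)

theorem isLeast_commonFixedPoints_of_maximal (hmono : ∀ f ∈ F, Monotone f)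
    (hinfl : ∀ f ∈ F, ∀ x : α, x ≤ f x) {d : α}
    (hd : Maximal (· ∈ lowerBounds (commonFixedPoints F)) d) :
    IsLeast (commonFixedPoints F) d :=
  ⟨fun f hf =>
    (hd.eq_of_le ((hmono f hf).map_mem_lowerBounds_commonFixedPoints hf hd.prop)
      (hinfl f hf d)).symm,
    hd.prop⟩

end CommonFixedPoints

theorem least_common_fixpoint_exists_general {D : Type*} [PartialOrder D] [OrderBot D]
    [Finite D] (F : Set (D → D))
    (hmono : ∀ f ∈ F, Monotone f)
    (hinfl : ∀ f ∈ F, ∀ x : D, x ≤ f x) :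
    ∃ d : D, (∀ f ∈ F, f d = d) ∧ ∀ e : D, (∀ f ∈ F, f e = e) → d ≤ e := by
  obtain ⟨d, hd⟩ := (Set.toFinite (lowerBounds (commonFixedPoints F))).exists_maximal
    ⟨⊥, fun _ _ => bot_le⟩
  exact ⟨d, isLeast_commonFixedPoints_of_maximal hmono hinfl hd⟩

/-- GI Corollary: if `(D, ⊑)` is a finite partial ordering with least element
`⊥` and `F` is a finite set of monotonic and inflationary functions on `D`,
then the least common fixpoint of the functions from `F` exists. -/
theorem least_common_fixpoint_exists {D : Type*} [PartialOrder D] [OrderBot D]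
    [Finite D] (F : Set (D → D)) (hF : F.Finite)
    (hmono : ∀ f ∈ F, Monotone f)
    (hinfl : ∀ f ∈ F, ∀ x : D, x ≤ f x) :
    ∃ d : D, (∀ f ∈ F, f d = d) ∧ ∀ e : D, (∀ f ∈ F, f e = e) → d ≤ e :=
  least_common_fixpoint_exists_general F hmono hinfl
end
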